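/- arXiv:1812.00818 — 5 statements merged into one kernel-verified Lean document; each statement's English description precedes it below -/
import Mathlib

section
/- Let {D_k} be defined by D_0 = ψ_0 and D_k = (1-θ_{k-1})ψ_k + θ_{k-1}D_{k-1}, where θ_k ∈ [0, θ_max] with θ_max < 1, and suppose ψ_k ≤ D_{k-1} for all k ≥ 1 and {D_k} is bounded below. Then {D_k} converges, and lim_{k→∞} ψ_k = lim_{k→∞} D_k. -/
/-!
Each step moves `D` towards `ψ (k + 1) ≤ D k`, so `D` is antitone and, being bounded below,
converges. The step `D (k + 1) - D k = (1 - θ k) (ψ (k + 1) - D k)` has weight at least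
`1 - θmax > 0`, so `ψ (k + 1)` is squeezed between `D k + (D (k + 1) - D k) / (1 - θmax)` and
`D k`, both of which tend to the limit of `D`.
-/

open Filter Topology

section RelaxedSequence

variable {ψ θ D : ℕ → ℝ}

theorem succ_sub_eq_of_relaxation (hDk : ∀ k, D (k + 1) = (1 - θ k) * ψ (k + 1) + θ k * D k)
    (k : ℕ) : D (k + 1) - D k = (1 - θ k) * (ψ (k + 1) - D k) := by
  rw [hDk]; ring

theorem antitone_of_relaxation (hθ : ∀ k, θ k ≤ 1)
    (hDk : ∀ k, D (k + 1) = (1 - θ k) * ψ (k + 1) + θ k * D k) (hψ : ∀ k, ψ (k + 1) ≤ D k) :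
    Antitone D := by
  refine antitone_nat_of_succ_le fun k => sub_nonpos.mp ?_
  rw [succ_sub_eq_of_relaxation hDk]
  exact mul_nonpos_of_nonneg_of_nonpos (sub_nonneg.mpr (hθ k)) (sub_nonpos.mpr (hψ k))

theorem add_succ_sub_div_le_of_relaxation {c : ℝ} (hc : 0 < c) (hθc : ∀ k, c ≤ 1 - θ k)
    (hDk : ∀ k, D (k + 1) = (1 - θ k) * ψ (k + 1) + θ k * D k) (hψ : ∀ k, ψ (k + 1) ≤ D k)
    (k : ℕ) : D k + (D (k + 1) - D k) / c ≤ ψ (k + 1) := by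
  have hstep : D (k + 1) - D k ≤ c * (ψ (k + 1) - D k) := by
    rw [succ_sub_eq_of_relaxation hDk]
    exact mul_le_mul_of_nonpos_right (hθc k) (sub_nonpos.mpr (hψ k))
  have : (D (k + 1) - D k) / c ≤ ψ (k + 1) - D k := by
    rwa [div_le_iff₀ hc, mul_comm]
  linarith

end RelaxedSequence

theorem tendsto_of_squeeze_succ {ψ D : ℕ → ℝ} {c l : ℝ} (hD : Tendsto D atTop (𝓝 l))
    (hlow : ∀ k, D k + (D (k + 1) - D k) / c ≤ ψ (k + 1)) (hup : ∀ k, ψ (k + 1) ≤ D k) :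
    Tendsto ψ atTop (𝓝 l) := by
  have hD1 : Tendsto (fun k => D (k + 1)) atTop (𝓝 l) := (tendsto_add_atTop_iff_nat 1).mpr hD
  have hlowlim : Tendsto (fun k => D k + (D (k + 1) - D k) / c) atTop (𝓝 l) := by
    simpa using hD.add ((hD1.sub hD).div_const c)
  exact (tendsto_add_atTop_iff_nat 1).mp
    (tendsto_of_tendsto_of_tendsto_of_le_of_le hlowlim hD hlow hup)

theorem nonmonotone_term_convergence_general (ψ θ D : ℕ → ℝ) (θmax : ℝ)
    (hθmax : θmax < 1)
    (hθ : ∀ k, θ k ∈ Set.Icc (0 : ℝ) θmax)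
    (hDk : ∀ k, D (k + 1) = (1 - θ k) * ψ (k + 1) + θ k * D k)
    (hψ : ∀ k, ψ (k + 1) ≤ D k)
    (hbdd : BddBelow (Set.range D)) :
    ∃ l : ℝ, Tendsto D atTop (nhds l) ∧ Tendsto ψ atTop (nhds l) := by
  have hanti : Antitone D :=
    antitone_of_relaxation (fun k => (hθ k).2.trans hθmax.le) hDk hψ
  have hD : Tendsto D atTop (𝓝 (⨅ k, D k)) := tendsto_atTop_ciInf hanti hbdd
  have hlow := add_succ_sub_div_le_of_relaxation (sub_pos.mpr hθmax)
    (fun k => sub_le_sub_left (hθ k).2 1) hDk hψ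
  exact ⟨_, hD, tendsto_of_squeeze_succ hD hlow hψ⟩

/-- If moreover `{D k}` is bounded below, then `{D k}` converges and
`lim ψ k = lim D k`. -/
theorem nonmonotone_term_convergence (ψ θ D : ℕ → ℝ) (θmax : ℝ)
    (hθmax : θmax < 1)
    (hθ : ∀ k, θ k ∈ Set.Icc (0 : ℝ) θmax)
    (hD0 : D 0 = ψ 0)
    (hDk : ∀ k, D (k + 1) = (1 - θ k) * ψ (k + 1) + θ k * D k)
    (hψ : ∀ k, ψ (k + 1) ≤ D k)
    (hbdd : BddBelow (Set.range D)) :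
    ∃ l : ℝ, Tendsto D atTop (nhds l) ∧ Tendsto ψ atTop (nhds l) :=
  nonmonotone_term_convergence_general ψ θ D θmax hθmax hθ hDk hψ hbdd
end

section
/- Let {s_k} be a nonincreasing sequence of nonnegative reals converging to 0 and ζ > 1, ν > 0 constants with s_k^ζ ≤ ν(s_k - s_{k+1}) for all sufficiently large k. Then there exists ς > 0 such that s_k ≤ ς k^{-1/(ζ-1)} for all sufficiently large k. -/
/-!
Put `t k = s k ^ (1 - ζ)`. Since `x ↦ x ^ (1 - ζ)` decreases with slope at least
`(ζ - 1) * s k ^ (-ζ)` in absolute value on `[s (k+1), s k]`, the recursion says that each step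
increases `t` by at least `(ζ - 1) / ν`.
Hence `t k` grows at least linearly in `k`, and inverting the power gives the decay rate
`s k ≤ ς * k ^ (-1 / (ζ - 1))`. A sequence that ever becomes nonpositive stays so and is trivial.
-/

open Filter Set

namespace Real

lemma neg_mul_rpow_sub_one_mul_sub_le_rpow_sub_rpow {p x y : ℝ} (hp : p < 0) (hy : 0 < y)
    (hyx : y ≤ x) : -p * x ^ (p - 1) * (x - y) ≤ y ^ p - x ^ p := by
  have hpos : ∀ t ∈ Icc y x, 0 < t := fun t ht => hy.trans_le ht.1
  have hderiv : ∀ t ∈ interior (Icc y x), deriv (fun t => t ^ p) t ≤ p * x ^ (p - 1) := by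
    intro t ht
    rw [interior_Icc] at ht
    have ht0 : 0 < t := hy.trans ht.1
    rw [deriv_rpow_const]
    have : x ^ (p - 1) ≤ t ^ (p - 1) := rpow_le_rpow_of_nonpos ht0 ht.2.le (by linarith)
    nlinarith
  have := (convex_Icc y x).image_sub_le_mul_sub_of_deriv_le
    (fun t ht => (continuousAt_rpow_const t p (Or.inl (hpos t ht).ne')).continuousWithinAt)
    (fun t ht => (differentiableAt_rpow_const_of_ne p
      (hpos t (interior_subset ht)).ne').differentiableWithinAt)
    hderiv y (left_mem_Icc.2 hyx) x (right_mem_Icc.2 hyx) hyx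
  linarith

lemma le_mul_rpow_inv_of_mul_le_rpow {x c k p : ℝ} (hx : 0 < x) (hc : 0 < c) (hk : 0 < k)
    (hp : p < 0) (h : c * k ≤ x ^ p) : x ≤ c ^ p⁻¹ * k ^ p⁻¹ := by
  rw [← mul_rpow hc.le hk.le]
  exact (le_rpow_inv_iff_of_neg hx (by positivity) hp).2 h

end Real

lemma rpow_one_sub_add_le_of_rpow_le_mul_sub {a b ζ ν : ℝ} (hζ : 1 < ζ) (hν : 0 < ν)
    (hb : 0 < b) (hba : b ≤ a) (h : a ^ ζ ≤ ν * (a - b)) :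
    a ^ (1 - ζ) + (ζ - 1) / ν ≤ b ^ (1 - ζ) := by
  have ha : 0 < a := hb.trans_le hba
  have hslope := Real.neg_mul_rpow_sub_one_mul_sub_le_rpow_sub_rpow (p := 1 - ζ)
    (by linarith) hb hba
  have hcancel : a ^ (-ζ) * a ^ ζ = 1 := by
    rw [← Real.rpow_add ha, neg_add_cancel, Real.rpow_zero]
  have hpow : 0 < a ^ (-ζ) := Real.rpow_pos_of_pos ha _
  calc a ^ (1 - ζ) + (ζ - 1) / ν
      = a ^ (1 - ζ) + (ζ - 1) / ν * (a ^ (-ζ) * a ^ ζ) := by rw [hcancel, mul_one]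
    _ ≤ a ^ (1 - ζ) + (ζ - 1) / ν * (a ^ (-ζ) * (ν * (a - b))) := by gcongr
    _ = a ^ (1 - ζ) + -(1 - ζ) * a ^ (1 - ζ - 1) * (a - b) := by
        rw [show 1 - ζ - 1 = -ζ by ring]; field_simp; ring
    _ ≤ b ^ (1 - ζ) := by linarith

lemma add_sub_mul_le_of_add_le_succ {t : ℕ → ℝ} {c : ℝ} {K : ℕ}
    (h : ∀ k ≥ K, t k + c ≤ t (k + 1)) {k : ℕ} (hk : K ≤ k) :
    t K + ((k : ℝ) - K) * c ≤ t k := by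
  induction k, hk using Nat.le_induction with
  | base => simp
  | succ k hk ih =>
    push_cast
    linarith [h k hk]

theorem lojasiewicz_recursion_sublinear_general (s : ℕ → ℝ) (ζ ν : ℝ) (hζ : 1 < ζ) (hν : 0 < ν)
    (hmono : ∀ k, s (k + 1) ≤ s k)
    (hrec : ∃ K₀ : ℕ, ∀ k ≥ K₀, s k ^ ζ ≤ ν * (s k - s (k + 1))) :
    ∃ ς > (0 : ℝ), ∃ K : ℕ, ∀ k ≥ K, s k ≤ ς * (k : ℝ) ^ (-(1 / (ζ - 1))) := by
  obtain ⟨K₀, hrec⟩ := hrec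
  by_cases! hsign : ∃ N, s N ≤ 0
  · obtain ⟨N, hN⟩ := hsign
    exact ⟨1, one_pos, N, fun k hk =>
      ((antitone_nat_of_succ_le hmono hk).trans hN).trans (by positivity)⟩
  set c := (ζ - 1) / ν
  have hc : 0 < c := div_pos (by linarith) hν
  have hgrowth : ∀ k ≥ K₀, s K₀ ^ (1 - ζ) + ((k : ℝ) - K₀) * c ≤ s k ^ (1 - ζ) :=
    fun k => add_sub_mul_le_of_add_le_succ fun j hj =>
      rpow_one_sub_add_le_of_rpow_le_mul_sub hζ hν (hsign _) (hmono j) (hrec j hj)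
  have hexp : -(1 / (ζ - 1)) = (1 - ζ)⁻¹ := by
    rw [one_div, ← inv_neg, neg_sub]
  refine ⟨(c / 2) ^ (1 - ζ)⁻¹, by positivity, 2 * K₀ + 1, fun k hk => ?_⟩
  have hk' : (2 * K₀ + 1 : ℝ) ≤ k := by exact_mod_cast hk
  have hhalf : c / 2 * k ≤ s k ^ (1 - ζ) := by
    have hlin := hgrowth k (by omega)
    have hstart : 0 ≤ s K₀ ^ (1 - ζ) := (Real.rpow_pos_of_pos (hsign K₀) _).le
    nlinarith
  rw [hexp]
  exact Real.le_mul_rpow_inv_of_mul_le_rpow (hsign k) (by positivity) (by linarith) (by linarith)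
    hhalf

/-- Łojasiewicz-type recursion, case `ζ > 1`: if `s` is nonnegative, nonincreasing,
converges to `0`, and `s k ^ ζ ≤ ν * (s k - s (k+1))` for all large `k`, then there is
`ς > 0` with `s k ≤ ς * k ^ (-1/(ζ-1))` for all sufficiently large `k`. -/
theorem lojasiewicz_recursion_sublinear (s : ℕ → ℝ) (ζ ν : ℝ) (hζ : 1 < ζ) (hν : 0 < ν)
    (hs : ∀ k, 0 ≤ s k) (hmono : ∀ k, s (k + 1) ≤ s k) (hlim : Tendsto s atTop (nhds 0))
    (hrec : ∃ K₀ : ℕ, ∀ k ≥ K₀, s k ^ ζ ≤ ν * (s k - s (k + 1))) :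
    ∃ ς > (0 : ℝ), ∃ K : ℕ, ∀ k ≥ K, s k ≤ ς * (k : ℝ) ^ (-(1 / (ζ - 1))) :=
  lojasiewicz_recursion_sublinear_general s ζ ν hζ hν hmono hrec
end

section
/- Let h : R^m → R^m be differentiable and strictly duplomonotone with constant τ̄ > 0, i.e., (h(x) - h(x - τ h(x)))^T h(x) > 0 for all x with h(x) ≠ 0 and all τ ∈ (0, τ̄]. Then for every x with h(x) ≠ 0, one has h(x)^T Dh(x) h(x) ≥ 0, where Dh(x) is the Jacobian of h at x. -/
open scoped RealInnerProductSpace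

/-- For a differentiable strictly duplomonotone map `h : ℝᵐ → ℝᵐ` with constant `τ̄ > 0`,
one has `⟪Dh(x) (h x), h x⟫ ≥ 0` whenever `h x ≠ 0`. -/
theorem strictly_duplomonotone_quadratic_nonneg {m : ℕ}
    (h : EuclideanSpace ℝ (Fin m) → EuclideanSpace ℝ (Fin m))
    (hdiff : Differentiable ℝ h) (τbar : ℝ) (hτ : 0 < τbar)
    (hduplo : ∀ x, h x ≠ 0 → ∀ τ : ℝ, 0 < τ → τ ≤ τbar →
      0 < ⟪h x - h (x - τ • h x), h x⟫) :
    ∀ x, h x ≠ 0 → 0 ≤ ⟪fderiv ℝ h x (h x), h x⟫ := by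
  intro x hx
  set v := h x with hv
  set φ : ℝ → ℝ := fun τ => ⟪h (x - τ • v), v⟫ with hφ
  -- φ has derivative -⟪Dh(x) v, v⟫ at 0
  have hpath : HasDerivAt (fun τ : ℝ => x - τ • v) (-v) 0 := by
    have : HasDerivAt (fun τ : ℝ => τ • v) v 0 := by
      simpa using (hasDerivAt_id (0:ℝ)).smul_const v
    exact ((hasDerivAt_const (0:ℝ) x).sub this).congr_deriv (zero_sub v)
  have hcomp : HasDerivAt (fun τ : ℝ => h (x - τ • v))
      (fderiv ℝ h (x - (0:ℝ) • v) (-v)) 0 :=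
    (hdiff (x - (0:ℝ) • v)).hasFDerivAt.comp_hasDerivAt 0 hpath
  have hD : HasDerivAt φ (-⟪fderiv ℝ h x v, v⟫) 0 := by
    have := (hcomp.inner ℝ (hasDerivAt_const (0:ℝ) v))
    simp only [zero_smul, sub_zero, inner_zero_right, add_zero, map_neg,
      inner_neg_left] at this ⊢
    simpa using this
  -- slope of φ at 0 is negative on (0, τbar]
  have hslope : Filter.Tendsto (slope φ 0) (nhdsWithin 0 (Set.Ioi 0))
      (nhds (-⟪fderiv ℝ h x v, v⟫)) :=
    (hasDerivAt_iff_tendsto_slope.mp hD).mono_left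
      (nhdsWithin_mono 0 (fun t ht => ne_of_gt ht))
  have hle : -⟪fderiv ℝ h x v, v⟫ ≤ 0 := by
    refine le_of_tendsto hslope ?_
    filter_upwards [Ioc_mem_nhdsGT_of_mem (Set.left_mem_Ico.mpr hτ)] with τ hτm
    obtain ⟨hτ0, hτb⟩ := hτm
    have hτ0' : (0:ℝ) < τ := hτ0
    have hd := hduplo x hx τ hτ0' hτb
    have : φ τ - φ 0 < 0 := by
      have : φ 0 - φ τ > 0 := by
        simpa [hφ, inner_sub_left, ← hv] using hd
      linarith
    rw [slope_def_field]
    have : (φ τ - φ 0) / τ ≤ 0 :=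
      div_nonpos_of_nonpos_of_nonneg (le_of_lt this) (le_of_lt hτ0')
    simpa [div_eq_inv_mul, sub_zero] using this
  linarith
end

section
/- Let h : R^m → R^n be differentiable with L-Lipschitz continuous derivative, let x, d ∈ R^m, and define ψ(x) = ½‖h(x)‖². If ‖Dh(y)‖ ≤ L₀ for all y on the segment [x, x+d], then ψ(x + d) ≤ ψ(x) + ⟨∇ψ(x), d⟩ + (½L₀² + ½L²‖d‖² + (‖h(x)‖ + L₀‖d‖)·L)‖d‖², where ∇ψ(x) is the gradient of ψ at x. -/
/-! Write `h (x + d) = h x + Dh(x) d + r`. The mean value inequality applied to `h - Dh(x)` on the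
segment gives `‖r‖ ≤ L‖d‖²`, and expanding `½‖h x + Dh(x) d + r‖²` with Cauchy–Schwarz on
`⟪h x, r⟫` and the triangle inequality on `‖Dh(x) d + r‖` yields the estimate. -/

open scoped RealInnerProductSpace

theorem norm_image_add_sub_sub_fderiv_le {E F : Type*} [NormedAddCommGroup E] [NormedSpace ℝ E]
    [NormedAddCommGroup F] [NormedSpace ℝ F] {f : E → F} (hf : Differentiable ℝ f) {L : ℝ}
    (hLip : ∀ u v, ‖fderiv ℝ f u - fderiv ℝ f v‖ ≤ L * ‖u - v‖) (x d : E) :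
    ‖f (x + d) - f x - fderiv ℝ f x d‖ ≤ L * ‖d‖ ^ 2 := by
  have hLd : 0 ≤ L * ‖d‖ := by simpa using (norm_nonneg _).trans (hLip (x + d) x)
  have bound : ∀ y ∈ segment ℝ x (x + d), ‖fderiv ℝ f y - fderiv ℝ f x‖ ≤ L * ‖d‖ := by
    rw [segment_eq_image']
    rintro _ ⟨t, ⟨ht₀, ht₁⟩, rfl⟩
    calc ‖fderiv ℝ f (x + t • (x + d - x)) - fderiv ℝ f x‖ ≤ L * ‖t • d‖ := by
          simpa using hLip (x + t • (x + d - x)) x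
      _ = t * (L * ‖d‖) := by rw [norm_smul, Real.norm_of_nonneg ht₀]; ring
      _ ≤ L * ‖d‖ := mul_le_of_le_one_left hLd ht₁
  have := (convex_segment x (x + d)).norm_image_sub_le_of_norm_fderiv_le' (fun y _ => hf y) bound
    (left_mem_segment ℝ x (x + d)) (right_mem_segment ℝ x (x + d))
  simpa [pow_two, mul_assoc] using this

theorem half_norm_add_add_sq_le {F : Type*} [NormedAddCommGroup F] [InnerProductSpace ℝ F]
    (a v r : F) :
    (1 / 2) * ‖a + (v + r)‖ ^ 2 ≤
      (1 / 2) * ‖a‖ ^ 2 + ⟪a, v⟫ + ‖a‖ * ‖r‖ + (1 / 2) * (‖v‖ + ‖r‖) ^ 2 := by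
  have hr : ⟪a, r⟫ ≤ ‖a‖ * ‖r‖ := real_inner_le_norm a r
  have hvr : ‖v + r‖ ^ 2 ≤ (‖v‖ + ‖r‖) ^ 2 := by gcongr; exact norm_add_le v r
  rw [norm_add_sq_real, inner_add_right]
  linarith

/-- Descent-type estimate: if `Dh` is `L`-Lipschitz and `‖Dh(y)‖ ≤ L₀` on the segment
`[x, x+d]`, then for `ψ(x) = ½‖h x‖²` one has
`ψ(x+d) ≤ ψ(x) + ⟪∇ψ(x), d⟫ + (½L₀² + ½L²‖d‖² + (‖h x‖ + L₀‖d‖)L)‖d‖²`. -/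
theorem lm_descent_estimate {m n : ℕ}
    (h : EuclideanSpace ℝ (Fin m) → EuclideanSpace ℝ (Fin n))
    (hdiff : Differentiable ℝ h) (L L₀ : ℝ)
    (hLip : ∀ u v, ‖fderiv ℝ h u - fderiv ℝ h v‖ ≤ L * ‖u - v‖)
    (x d : EuclideanSpace ℝ (Fin m))
    (hL₀ : ∀ t ∈ Set.Icc (0 : ℝ) 1, ‖fderiv ℝ h (x + t • d)‖ ≤ L₀)
    (ψ : EuclideanSpace ℝ (Fin m) → ℝ)
    (hψ : ∀ y, ψ y = (1 / 2) * ‖h y‖ ^ 2) :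
    ψ (x + d) ≤ ψ x + ⟪ContinuousLinearMap.adjoint (fderiv ℝ h x) (h x), d⟫ +
      ((1 / 2) * L₀ ^ 2 + (1 / 2) * L ^ 2 * ‖d‖ ^ 2 + (‖h x‖ + L₀ * ‖d‖) * L) * ‖d‖ ^ 2 := by
  set A := fderiv ℝ h x
  set r := h (x + d) - h x - A d
  have hr : ‖r‖ ≤ L * ‖d‖ ^ 2 := norm_image_add_sub_sub_fderiv_le hdiff hLip x d
  have hAd : ‖A d‖ ≤ L₀ * ‖d‖ := A.le_of_opNorm_le (by simpa using hL₀ 0 (by simp)) d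
  have hsplit : h (x + d) = h x + (A d + r) := by simp only [r]; abel
  rw [hψ, hψ, hsplit, ContinuousLinearMap.adjoint_inner_left]
  calc (1 / 2) * ‖h x + (A d + r)‖ ^ 2
      ≤ (1 / 2) * ‖h x‖ ^ 2 + ⟪h x, A d⟫ + ‖h x‖ * ‖r‖ + (1 / 2) * (‖A d‖ + ‖r‖) ^ 2 :=
        half_norm_add_add_sq_le _ _ _
    _ ≤ (1 / 2) * ‖h x‖ ^ 2 + ⟪h x, A d⟫ + ‖h x‖ * (L * ‖d‖ ^ 2) +
          (1 / 2) * (L₀ * ‖d‖ + L * ‖d‖ ^ 2) ^ 2 := by gcongr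
    _ = _ := by ring
end

section
/- Let ψ : R^m → R be differentiable and bounded below by 0, and suppose a sequence {x_k} together with auxiliary values D_k satisfies D_0 = ψ(x_0), D_{k+1} ≤ D_k, ψ(x_k) ≤ D_k, and D_k - D_{k+1} ≥ c‖∇ψ(x_k)‖² for some c > 0 and all k. Then for any ε > 0, there exists k ≤ ⌈ψ(x_0)/(c ε²) + 1⌉ with ‖∇ψ(x_k)‖ ≤ ε. -/
/-! With `ε < ‖∇ψ(x_k)‖` for all `k < N`, sufficient decrease telescopes to
`0 ≤ D_N ≤ ψ(x_0) - N c ε²`, which fails once `N c ε² > ψ(x_0)`. -/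

lemma le_sub_mul_of_forall_le_sub {D : ℕ → ℝ} {a : ℝ} {n : ℕ}
    (h : ∀ k < n, a ≤ D k - D (k + 1)) : D n ≤ D 0 - n * a := by
  induction n with
  | zero => simp
  | succ n ih =>
    have hstep := h n n.lt_succ_self
    have hprev := ih fun k hk => h k (hk.trans n.lt_succ_self)
    push_cast
    linarith

lemma exists_lt_le_of_sufficient_decrease {D g : ℕ → ℝ} {c ε : ℝ} {n : ℕ}
    (hc : 0 < c) (hε : 0 ≤ ε) (hD : ∀ k, 0 ≤ D k)
    (hdec : ∀ k, c * g k ^ 2 ≤ D k - D (k + 1)) (hn : D 0 < n * (c * ε ^ 2)) :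
    ∃ k < n, g k ≤ ε := by
  by_contra! hg
  have hstep : ∀ k < n, c * ε ^ 2 ≤ D k - D (k + 1) := fun k hk =>
    calc c * ε ^ 2 ≤ c * g k ^ 2 := by gcongr; exact (hg k hk).le
      _ ≤ D k - D (k + 1) := hdec k
  have := le_sub_mul_of_forall_le_sub hstep
  linarith [hD n]

lemma lt_ceil_div_add_one_mul (a : ℝ) {b : ℝ} (hb : 0 < b) : a < ⌈a / b + 1⌉₊ * b :=
  calc a < (a / b + 1) * b := by rw [add_mul, div_mul_cancel₀ a hb.ne']; linarith
    _ ≤ ⌈a / b + 1⌉₊ * b := by gcongr; exact Nat.le_ceil _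

theorem lm_iteration_complexity_general {m : ℕ}
    (ψ : EuclideanSpace ℝ (Fin m) → ℝ)
    (hψ0 : ∀ y, 0 ≤ ψ y)
    (x : ℕ → EuclideanSpace ℝ (Fin m)) (D : ℕ → ℝ) (c : ℝ) (hc : 0 < c)
    (hD0 : D 0 = ψ (x 0))
    (hψD : ∀ k, ψ (x k) ≤ D k)
    (hdec : ∀ k, c * ‖gradient ψ (x k)‖ ^ 2 ≤ D k - D (k + 1))
    (ε : ℝ) (hε : 0 < ε) :
    ∃ k ≤ ⌈ψ (x 0) / (c * ε ^ 2) + 1⌉₊, ‖gradient ψ (x k)‖ ≤ ε := by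
  have hD : ∀ k, 0 ≤ D k := fun k => (hψ0 _).trans (hψD k)
  have hN : D 0 < ⌈ψ (x 0) / (c * ε ^ 2) + 1⌉₊ * (c * ε ^ 2) :=
    hD0 ▸ lt_ceil_div_add_one_mul _ (by positivity)
  obtain ⟨k, hk, hgrad⟩ := exists_lt_le_of_sufficient_decrease hc hε.le hD hdec hN
  exact ⟨k, hk.le, hgrad⟩

/-- If `D 0 = ψ(x 0)`, `D` is nonincreasing, `ψ(x k) ≤ D k`, `ψ ≥ 0`, and
`D k - D (k+1) ≥ c ‖∇ψ(x k)‖²`, then for any `ε > 0` there is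
`k ≤ ⌈ψ(x 0)/(c ε²) + 1⌉` with `‖∇ψ(x k)‖ ≤ ε`. -/
theorem lm_iteration_complexity {m : ℕ}
    (ψ : EuclideanSpace ℝ (Fin m) → ℝ) (hψdiff : Differentiable ℝ ψ)
    (hψ0 : ∀ y, 0 ≤ ψ y)
    (x : ℕ → EuclideanSpace ℝ (Fin m)) (D : ℕ → ℝ) (c : ℝ) (hc : 0 < c)
    (hD0 : D 0 = ψ (x 0))
    (hDdec : ∀ k, D (k + 1) ≤ D k)
    (hψD : ∀ k, ψ (x k) ≤ D k)
    (hdec : ∀ k, c * ‖gradient ψ (x k)‖ ^ 2 ≤ D k - D (k + 1))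
    (ε : ℝ) (hε : 0 < ε) :
    ∃ k ≤ ⌈ψ (x 0) / (c * ε ^ 2) + 1⌉₊, ‖gradient ψ (x k)‖ ≤ ε :=
  lm_iteration_complexity_general ψ hψ0 x D c hc hD0 hψD hdec ε hε
end
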